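/- Lemma 2.1: Let c : [0,∞) → ℝ^d be a differentiable solution of the mass-action ODE c'(t) = Σ_k κ_k c(t)^{y_k} ζ_k with c(0) ∈ ℝ^d_{>0}, and suppose c satisfies the DR condition. Then c(t) ∈ ℝ^d_{>0} for all t ≥ 0, and there exist a matrix M ∈ ℝ^{d×d} and a vector b ∈ ℝ^d such that Σ_k κ_k c(t)^{y_k} ζ_k = M c(t) + b for all t ≥ 0; that is, along this solution the right-hand side of the mass-action ODE is an affine (linear) function of c(t). -/
import Mathlib


open Finset

/-- Monomial `u^v = ∏ i, u i ^ v i` (with the convention `0^0 = 1`). -/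
noncomputable def monPow {d : ℕ} (u : Fin d → ℝ) (v : Fin d → ℕ) : ℝ :=
  ∏ i, u i ^ v i

/-- The reaction vector `ζ = y' - y`, viewed as a real vector. -/
def zetaVec {d : ℕ} (y y' : Fin d → ℕ) : Fin d → ℝ :=
  fun i => (y' i : ℝ) - (y i : ℝ)

/-- Stochastic mass action intensity `λ_k(x) = κ_k ∏_i x_i!/(x_i - y_{ki})!`,
taken to be `0` when `x` is not componentwise at least `y_k`. -/
noncomputable def intensity {d : ℕ} (κk : ℝ) (yk : Fin d → ℕ) (x : Fin d → ℕ) : ℝ :=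
  κk * ∏ i, ((x i).descFactorial (yk i) : ℝ)

/-- Right-hand side of the deterministic mass-action ODE: `Σ_k κ_k c^{y_k} ζ_k`. -/
noncomputable def massActionRHS {d K : ℕ} (κ : Fin K → ℝ) (y y' : Fin K → Fin d → ℕ)
    (c : Fin d → ℝ) : Fin d → ℝ :=
  ∑ k, (κ k * monPow c (y k)) • zetaVec (y k) (y' k)

/-- `c` is differentiable on `[0,∞)` and solves the mass-action ODE there. -/
def solvesMassAction {d K : ℕ} (κ : Fin K → ℝ) (y y' : Fin K → Fin d → ℕ)
    (c : ℝ → Fin d → ℝ) : Prop :=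
  ∀ t ≥ (0:ℝ), HasDerivWithinAt c (massActionRHS κ y y' (c t)) (Set.Ici 0) t

/-- The dynamical and restricted (DR) complex balance condition: for every complex `z`
with `‖z‖₁ ≥ 2` and every `t ≥ 0`,
`Σ_{k : y_k = z} κ_k c(t)^z = Σ_{k : y'_k = z} κ_k c(t)^{y_k}`. -/
def DRcondition {d K : ℕ} (κ : Fin K → ℝ) (y y' : Fin K → Fin d → ℕ)
    (c : ℝ → Fin d → ℝ) : Prop :=
  ∀ z : Fin d → ℕ, 2 ≤ ∑ i, z i → ∀ t ≥ (0:ℝ),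
    ∑ k ∈ univ.filter (fun k => y k = z), κ k * monPow (c t) z
      = ∑ k ∈ univ.filter (fun k => y' k = z), κ k * monPow (c t) (y k)

/-- `P` solves the chemical master equation on `[0,∞)`:
`∂ₜ P(x,t) = Σ_k λ_k(x-ζ_k) P(x-ζ_k,t) 1{x-ζ_k ≥ 0} - Σ_k λ_k(x) P(x,t)`. -/
def solvesCME {d K : ℕ} (κ : Fin K → ℝ) (y y' : Fin K → Fin d → ℕ)
    (P : (Fin d → ℕ) → ℝ → ℝ) : Prop :=
  ∀ x : Fin d → ℕ, ∀ t ≥ (0:ℝ),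
    HasDerivWithinAt (P x)
      ((∑ k, if ∀ i, y' k i ≤ x i + y k i then
          intensity (κ k) (y k) (fun i => x i + y k i - y' k i)
            * P (fun i => x i + y k i - y' k i) t
        else 0)
       - ∑ k, intensity (κ k) (y k) x * P x t)
      (Set.Ici 0) t

/-- The product-Poisson probability mass function `∏_i e^{-c_i} c_i^{x_i}/x_i!`. -/
noncomputable def productPoisson {d : ℕ} (c : Fin d → ℝ) (x : Fin d → ℕ) : ℝ :=
  ∏ i, Real.exp (-(c i)) * (c i) ^ (x i) / (x i).factorial

open Matrix
lemma dual_sep {ι : Type*} [Fintype ι] [DecidableEq ι]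
    (W : Submodule ℝ (ι → ℝ)) (g : ι → ℝ) (hg : g ∉ W) :
    ∃ v : ι → ℝ, (∀ x ∈ W, v ⬝ᵥ x = 0) ∧ v ⬝ᵥ g ≠ 0 := by
  have hq : W.mkQ g ≠ 0 := by
    simpa [Submodule.Quotient.mk_eq_zero] using hg
  obtain ⟨f, hf⟩ : ∃ f : Module.Dual ℝ ((ι → ℝ) ⧸ W), f (W.mkQ g) ≠ 0 := by
    by_contra h
    push_neg at h
    exact hq ((Module.forall_dual_apply_eq_zero_iff ℝ _).mp h)
  set φ : (ι → ℝ) →ₗ[ℝ] ℝ := f.comp W.mkQ with hφ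
  have hφW : ∀ x ∈ W, φ x = 0 := by
    intro x hx
    simp [hφ, (Submodule.Quotient.mk_eq_zero W).mpr hx]
  have key : ∀ x : ι → ℝ, φ x = (fun j => φ (Pi.single j 1)) ⬝ᵥ x := by
    intro x
    conv_lhs => rw [pi_eq_sum_univ x]
    rw [map_sum]
    simp only [dotProduct]
    refine Finset.sum_congr rfl fun j _ => ?_
    rw [_root_.map_smul, smul_eq_mul, mul_comm]
    congr 2
    funext j'
    simp [Pi.single_apply, eq_comm]
  refine ⟨fun j => φ (Pi.single j 1), fun x hx => ?_, ?_⟩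
  · rw [← key x]; exact hφW x hx
  · rw [← key g]; exact fun h => hf (by simpa [hφ] using h)

lemma fredholm_surj {ι : Type*} [Fintype ι] [DecidableEq ι] (A : Matrix ι ι ℝ) (g : ι → ℝ)
    (h : ∀ v : ι → ℝ, A.vecMul v = 0 → v ⬝ᵥ g = 0) :
    ∃ ψ : ι → ℝ, A.mulVec ψ = g := by
  by_contra hng
  push_neg at hng
  have hgW : g ∉ LinearMap.range A.mulVecLin := by
    rintro ⟨ψ, hψ⟩
    exact hng ψ (by simpa using hψ)
  obtain ⟨v, hv0, hvg⟩ := dual_sep _ g hgW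
  refine hvg (h v ?_)
  funext z
  have h1 : v ⬝ᵥ A.mulVec (Pi.single z 1) = 0 :=
    hv0 _ ⟨Pi.single z 1, by simp⟩
  rw [Matrix.dotProduct_mulVec] at h1
  simpa [dotProduct, Pi.single_apply] using h1

lemma substoch_solve {ι : Type*} [Fintype ι] [DecidableEq ι] (Q : Matrix ι ι ℝ) (g : ι → ℝ)
    (hQ0 : ∀ w z, 0 ≤ Q w z) (hrow : ∀ w, ∑ z, Q w z ≤ 1)
    (hg : ∀ w, ∑ z, Q w z = 1 → g w = 0) :
    ∃ ψ : ι → ℝ, ∀ w, ψ w = ∑ z, Q w z * ψ z + g w := by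
  have hker : ∀ v : ι → ℝ, (1 - Q).vecMul v = 0 → v ⬝ᵥ g = 0 := by
    intro v hv
    have hv' : ∀ z, v z = ∑ w, v w * Q w z := by
      intro z
      have h3 := congrFun hv z
      rw [Matrix.vecMul_sub, Matrix.vecMul_one] at h3
      have h2 : v z - Matrix.vecMul v Q z = 0 := h3
      simp only [Matrix.vecMul, dotProduct] at h2
      linarith
    -- ℓ¹ argument
    have habs : ∑ z, |v z| ≤ ∑ w, |v w| * ∑ z, Q w z := by
      calc ∑ z, |v z| = ∑ z, |∑ w, v w * Q w z| := by
            simp_rw [← hv']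
        _ ≤ ∑ z, ∑ w, |v w| * Q w z := by
            refine Finset.sum_le_sum fun z _ => ?_
            refine (Finset.abs_sum_le_sum_abs _ _).trans ?_
            refine Finset.sum_le_sum fun w _ => ?_
            rw [abs_mul, abs_of_nonneg (hQ0 w z)]
        _ = ∑ w, |v w| * ∑ z, Q w z := by
            rw [Finset.sum_comm]
            simp_rw [Finset.mul_sum]
    have hzero : ∀ w, |v w| * (1 - ∑ z, Q w z) = 0 := by
      have hsumnn : ∀ w ∈ univ, 0 ≤ |v w| * (1 - ∑ z, Q w z) := fun w _ =>
        mul_nonneg (abs_nonneg _) (by linarith [hrow w])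
      have hsle : ∑ w, |v w| * (1 - ∑ z, Q w z) ≤ 0 := by
        have : ∑ w, |v w| * (1 - ∑ z, Q w z)
            = ∑ w, |v w| - ∑ w, |v w| * ∑ z, Q w z := by
          rw [← Finset.sum_sub_distrib]
          congr 1; funext w; ring
        linarith
      have hseq : ∑ w, |v w| * (1 - ∑ z, Q w z) = 0 :=
        le_antisymm hsle (Finset.sum_nonneg hsumnn)
      intro w
      exact (Finset.sum_eq_zero_iff_of_nonneg hsumnn).mp hseq w (mem_univ w)
    rw [dotProduct]
    refine Finset.sum_eq_zero fun w _ => ?_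
    rcases eq_or_lt_of_le (hrow w) with heq | hlt
    · rw [hg w heq, mul_zero]
    · have : |v w| = 0 := by
        have := hzero w
        have h1 : 1 - ∑ z, Q w z > 0 := by linarith
        exact by
          rcases mul_eq_zero.mp this with h | h
          · exact h
          · linarith
      rw [abs_eq_zero.mp this, zero_mul]
  obtain ⟨ψ, hψ⟩ := fredholm_surj (1 - Q) g hker
  refine ⟨ψ, fun w => ?_⟩
  have h3 := congrFun hψ w
  rw [Matrix.sub_mulVec, Matrix.one_mulVec] at h3
  have h4 : ψ w - Q.mulVec ψ w = g w := h3
  simp only [Matrix.mulVec, dotProduct] at h4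
  linarith

lemma monPow_of_sum_eq_zero {d : ℕ} (u : Fin d → ℝ) {v : Fin d → ℕ}
    (h : ∑ j, v j = 0) : monPow u v = 1 := by
  have h0 : ∀ j, v j = 0 := by
    intro j
    exact (Finset.sum_eq_zero_iff.mp h) j (mem_univ j)
  unfold monPow
  simp [h0]

lemma monPow_of_sum_eq_one {d : ℕ} (u : Fin d → ℝ) {v : Fin d → ℕ}
    (h : ∑ j, v j = 1) : monPow u v = ∑ j, (v j : ℝ) * u j := by
  obtain ⟨j₀, hj₀⟩ : ∃ j₀, v j₀ ≠ 0 := by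
    by_contra hc
    push_neg at hc
    simp [hc] at h
  have hle : v j₀ ≤ 1 := h ▸ Finset.single_le_sum (fun j _ => Nat.zero_le _) (mem_univ j₀)
  have hv1 : v j₀ = 1 := le_antisymm hle (Nat.one_le_iff_ne_zero.mpr hj₀)
  have hrest : ∀ j, j ≠ j₀ → v j = 0 := by
    intro j hj
    have := Finset.add_sum_erase univ v (mem_univ j₀)
    rw [h, hv1] at this
    have h0 : ∑ j ∈ univ.erase j₀, v j = 0 := by omega
    exact (Finset.sum_eq_zero_iff.mp h0) j (Finset.mem_erase.mpr ⟨hj, mem_univ j⟩)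
  unfold monPow
  rw [Finset.prod_eq_single j₀ (fun j _ hj => by rw [hrest j hj, pow_zero])
    (fun hj => absurd (mem_univ j₀) hj)]
  rw [Finset.sum_eq_single j₀ (fun j _ hj => by rw [hrest j hj]; simp)
    (fun hj => absurd (mem_univ j₀) hj)]
  rw [hv1]; simp

lemma lemA {d K : ℕ} (κ : Fin K → ℝ) (y y' : Fin K → Fin d → ℕ)
    (c : ℝ → Fin d → ℝ) (hDR : DRcondition κ y y' c)
    (H : (Fin d → ℕ) → ℝ) (hH : ∀ z : Fin d → ℕ, ¬ 2 ≤ ∑ j, z j → H z = 0)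
    (t : ℝ) (ht : 0 ≤ t) :
    ∑ k, κ k * monPow (c t) (y k) * H (y k)
      = ∑ k, κ k * monPow (c t) (y k) * H (y' k) := by
  classical
  set Z : Finset (Fin d → ℕ) :=
    (univ.image y ∪ univ.image y').filter (fun z => 2 ≤ ∑ j, z j) with hZ
  -- group LHS
  have hL : ∑ k, κ k * monPow (c t) (y k) * H (y k)
      = ∑ z ∈ Z, H z * ∑ k ∈ univ.filter (fun k => y k = z), κ k * monPow (c t) z := by
    rw [← Finset.sum_filter_add_sum_filter_not univ (fun k => 2 ≤ ∑ j, y k j)]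
    have h0 : ∑ k ∈ univ.filter (fun k => ¬ 2 ≤ ∑ j, y k j),
        κ k * monPow (c t) (y k) * H (y k) = 0 := by
      refine Finset.sum_eq_zero fun k hk => ?_
      rw [hH _ (Finset.mem_filter.mp hk).2, mul_zero]
    rw [h0, add_zero]
    rw [← Finset.sum_fiberwise_of_maps_to (g := y)
      (t := Z) (fun k hk => ?side) (fun k => κ k * monPow (c t) (y k) * H (y k))]
    case side =>
      rw [hZ, Finset.mem_filter]
      exact ⟨Finset.mem_union_left _ (Finset.mem_image_of_mem y (mem_univ k)),
        (Finset.mem_filter.mp hk).2⟩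
    refine Finset.sum_congr rfl fun z hz => ?_
    rw [Finset.filter_filter, Finset.mul_sum]
    have hzz : 2 ≤ ∑ j, z j := (Finset.mem_filter.mp hz).2
    refine Finset.sum_congr ?_ fun k hk => ?_
    · apply Finset.filter_congr
      intro k _
      constructor
      · rintro ⟨-, h2⟩; exact h2
      · intro h2; exact ⟨by rw [h2]; exact hzz, h2⟩
    · have : y k = z := (Finset.mem_filter.mp hk).2
      rw [this]; ring
  -- group RHS
  have hR : ∑ k, κ k * monPow (c t) (y k) * H (y' k)
      = ∑ z ∈ Z, H z * ∑ k ∈ univ.filter (fun k => y' k = z), κ k * monPow (c t) (y k) := by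
    rw [← Finset.sum_filter_add_sum_filter_not univ (fun k => 2 ≤ ∑ j, y' k j)]
    have h0 : ∑ k ∈ univ.filter (fun k => ¬ 2 ≤ ∑ j, y' k j),
        κ k * monPow (c t) (y k) * H (y' k) = 0 := by
      refine Finset.sum_eq_zero fun k hk => ?_
      rw [hH _ (Finset.mem_filter.mp hk).2, mul_zero]
    rw [h0, add_zero]
    rw [← Finset.sum_fiberwise_of_maps_to (g := y')
      (t := Z) (fun k hk => ?side) (fun k => κ k * monPow (c t) (y k) * H (y' k))]
    case side =>
      rw [hZ, Finset.mem_filter]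
      exact ⟨Finset.mem_union_right _ (Finset.mem_image_of_mem y' (mem_univ k)),
        (Finset.mem_filter.mp hk).2⟩
    refine Finset.sum_congr rfl fun z hz => ?_
    rw [Finset.filter_filter, Finset.mul_sum]
    have hzz : 2 ≤ ∑ j, z j := (Finset.mem_filter.mp hz).2
    refine Finset.sum_congr ?_ fun k hk => ?_
    · apply Finset.filter_congr
      intro k _
      constructor
      · rintro ⟨-, h2⟩; exact h2
      · intro h2; exact ⟨by rw [h2]; exact hzz, h2⟩
    · have : y' k = z := (Finset.mem_filter.mp hk).2
      rw [this]; ring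
  rw [hL, hR]
  refine Finset.sum_congr rfl fun z hz => ?_
  rw [hDR z (Finset.mem_filter.mp hz).2 t ht]

lemma affine_of_DR {d K : ℕ} (κ : Fin K → ℝ) (y y' : Fin K → Fin d → ℕ)
    (hκ : ∀ k, 0 ≤ κ k) (c : ℝ → Fin d → ℝ)
    (hDR : DRcondition κ y y' c) :
    ∃ (M : Matrix (Fin d) (Fin d) ℝ) (b : Fin d → ℝ),
      ∀ t ≥ (0:ℝ), massActionRHS κ y y' (c t) = M.mulVec (c t) + b := by
  classical
  set β : (Fin d → ℕ) → ℝ := fun w => ∑ k ∈ univ.filter (fun k => y k = w), κ k with hβ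
  have hβ0 : ∀ w, 0 ≤ β w := fun w => Finset.sum_nonneg fun k _ => hκ k
  set Zc : Finset (Fin d → ℕ) :=
    (univ.image y).filter (fun w => 2 ≤ ∑ j, w j ∧ 0 < β w) with hZc
  have hZmem : ∀ w ∈ Zc, 2 ≤ ∑ j, w j ∧ 0 < β w := fun w hw => (Finset.mem_filter.mp hw).2
  -- fiberwise regrouping helper
  have fib : ∀ (w : Fin d → ℕ) (f : Fin K → ℝ),
      ∑ z ∈ Zc, ∑ k ∈ univ.filter (fun k => y k = w ∧ y' k = z), f k
        = ∑ k ∈ univ.filter (fun k => y k = w ∧ y' k ∈ Zc), f k := by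
    intro w f
    rw [← Finset.sum_fiberwise_of_maps_to (g := y') (t := Zc)
        (fun k hk => (Finset.mem_filter.mp hk).2.2) f]
    refine Finset.sum_congr rfl fun z hz => ?_
    rw [Finset.filter_filter]
    refine Finset.sum_congr (Finset.filter_congr fun k _ => ?_) (fun _ _ => rfl)
    constructor
    · rintro ⟨h1, h2⟩; exact ⟨⟨h1, h2 ▸ hz⟩, h2⟩
    · rintro ⟨⟨h1, -⟩, h2⟩; exact ⟨h1, h2⟩
  set Q : Matrix {w // w ∈ Zc} {w // w ∈ Zc} ℝ := fun w z =>
    (∑ k ∈ univ.filter (fun k => y k = w.1 ∧ y' k = z.1), κ k) / β w.1 with hQdef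
  set g : Fin d → {w // w ∈ Zc} → ℝ := fun i w =>
    (∑ k ∈ univ.filter (fun k => y k = w.1 ∧ (∑ j, y' k j) ≤ 1), κ k * (y' k i : ℝ)) / β w.1
    with hgdef
  have hrowsum : ∀ w : {w // w ∈ Zc},
      ∑ z, Q w z = (∑ k ∈ univ.filter (fun k => y k = w.1 ∧ y' k ∈ Zc), κ k) / β w.1 := by
    intro w
    rw [Finset.univ_eq_attach]
    rw [show (∑ z ∈ Zc.attach, Q w z)
        = ∑ z ∈ Zc.attach, (∑ k ∈ univ.filter (fun k => y k = w.1 ∧ y' k = z.1), κ k) / β w.1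
      from rfl]
    rw [Finset.sum_attach Zc
      (fun z => (∑ k ∈ univ.filter (fun k => y k = w.1 ∧ y' k = z), κ k) / β w.1)]
    rw [← Finset.sum_div, fib w.1 κ]
  have hrow : ∀ w : {w // w ∈ Zc}, ∑ z, Q w z ≤ 1 := by
    intro w
    have hpos := (hZmem w.1 w.2).2
    rw [hrowsum w, div_le_one hpos]
    refine Finset.sum_le_sum_of_subset_of_nonneg ?_ (fun k _ _ => hκ k)
    intro k hk
    simp only [Finset.mem_filter] at hk ⊢
    exact ⟨hk.1, hk.2.1⟩
  have hknock : ∀ w : {w // w ∈ Zc}, ∑ z, Q w z = 1 →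
      ∀ k, y k = w.1 → y' k ∉ Zc → κ k = 0 := by
    intro w h1 k hyk hnz
    have hpos := (hZmem w.1 w.2).2
    rw [hrowsum w, div_eq_one_iff_eq (ne_of_gt hpos)] at h1
    have hsplit := Finset.sum_filter_add_sum_filter_not
      (univ.filter (fun k => y k = w.1)) (fun k => y' k ∈ Zc) κ
    rw [Finset.filter_filter] at hsplit
    have hrest : ∑ k ∈ (univ.filter (fun k => y k = w.1)).filter (fun k => ¬ y' k ∈ Zc),
        κ k = 0 := by
      have : β w.1 = ∑ k ∈ univ.filter (fun k => y k = w.1), κ k := rfl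
      rw [h1] at hsplit
      linarith [hsplit]
    have := (Finset.sum_eq_zero_iff_of_nonneg (fun k _ => hκ k)).mp hrest k
      (by rw [Finset.mem_filter, Finset.mem_filter]; exact ⟨⟨mem_univ k, hyk⟩, hnz⟩)
    exact this
  have hgz : ∀ i, ∀ w : {w // w ∈ Zc}, ∑ z, Q w z = 1 → g i w = 0 := by
    intro i w h1
    have hnum : ∑ k ∈ univ.filter (fun k => y k = w.1 ∧ (∑ j, y' k j) ≤ 1),
        κ k * (y' k i : ℝ) = 0 := by
      refine Finset.sum_eq_zero fun k hk => ?_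
      obtain ⟨-, hyk, hle⟩ := Finset.mem_filter.mp hk
      have hnz : y' k ∉ Zc := by
        intro hmem
        have := (hZmem _ hmem).1
        omega
      rw [hknock w h1 k hyk hnz, zero_mul]
    show (∑ k ∈ univ.filter (fun k => y k = w.1 ∧ (∑ j, y' k j) ≤ 1),
        κ k * (y' k i : ℝ)) / β w.1 = 0
    rw [hnum, zero_div]
  have hψex : ∀ i, ∃ ψ : {w // w ∈ Zc} → ℝ, ∀ w, ψ w = ∑ z, Q w z * ψ z + g i w := by
    intro i
    refine substoch_solve Q (g i) (fun w z => ?_) hrow (hgz i)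
    exact div_nonneg (Finset.sum_nonneg fun k _ => hκ k) (hβ0 _)
  choose ψ hψs using hψex
  set φ : Fin d → (Fin d → ℕ) → ℝ := fun i z =>
    if h : z ∈ Zc then ψ i ⟨z, h⟩ else if 2 ≤ ∑ j, z j then 0 else (z i : ℝ) with hφ
  have hφ_low : ∀ i (z : Fin d → ℕ), (∑ j, z j) ≤ 1 → φ i z = (z i : ℝ) := by
    intro i z hz
    have h1 : z ∉ Zc := fun h => by have := (hZmem z h).1; omega
    have h2 : ¬ 2 ≤ ∑ j, z j := by omega
    simp only [hφ, dif_neg h1, if_neg h2]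
  have hφ_zc : ∀ i z (h : z ∈ Zc), φ i z = ψ i ⟨z, h⟩ := by
    intro i z h
    simp only [hφ, dif_pos h]
  have hφ_high : ∀ i (z : Fin d → ℕ), 2 ≤ ∑ j, z j → z ∉ Zc → φ i z = 0 := by
    intro i z h1 h2
    simp only [hφ, dif_neg h2, if_pos h1]
  -- the key cancellation identity
  have key : ∀ i (w : Fin d → ℕ) (hw : w ∈ Zc),
      ∑ k ∈ univ.filter (fun k => y k = w), κ k * φ i (y' k) = β w * ψ i ⟨w, hw⟩ := by
    intro i w hw
    have hpos : 0 < β w := (hZmem w hw).2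
    have hsplit1 := Finset.sum_filter_add_sum_filter_not
      (univ.filter (fun k => y k = w)) (fun k => (∑ j, y' k j) ≤ 1)
      (fun k => κ k * φ i (y' k))
    have hsplit2 := Finset.sum_filter_add_sum_filter_not
      ((univ.filter (fun k => y k = w)).filter (fun k => ¬ (∑ j, y' k j) ≤ 1))
      (fun k => y' k ∈ Zc) (fun k => κ k * φ i (y' k))
    have hlow : ∑ k ∈ (univ.filter (fun k => y k = w)).filter (fun k => (∑ j, y' k j) ≤ 1),
        κ k * φ i (y' k) = β w * g i ⟨w, hw⟩ := by
      have hbg : β w * g i ⟨w, hw⟩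
          = ∑ k ∈ univ.filter (fun k => y k = w ∧ (∑ j, y' k j) ≤ 1), κ k * (y' k i : ℝ) := by
        show β w * ((∑ k ∈ univ.filter (fun k => y k = w ∧ (∑ j, y' k j) ≤ 1),
          κ k * (y' k i : ℝ)) / β w) = _
        rw [mul_div_cancel₀ _ (ne_of_gt hpos)]
      rw [hbg, Finset.filter_filter]
      refine Finset.sum_congr rfl fun k hk => ?_
      rw [hφ_low i (y' k) (Finset.mem_filter.mp hk).2.2]
    have hhigh : ∑ k ∈ ((univ.filter (fun k => y k = w)).filter
          (fun k => ¬ (∑ j, y' k j) ≤ 1)).filter (fun k => ¬ y' k ∈ Zc),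
        κ k * φ i (y' k) = 0 := by
      refine Finset.sum_eq_zero fun k hk => ?_
      obtain ⟨hk1, hk2⟩ := Finset.mem_filter.mp hk
      obtain ⟨-, hk3⟩ := Finset.mem_filter.mp hk1
      rw [hφ_high i (y' k) (by omega) hk2, mul_zero]
    have hmid : ∑ k ∈ ((univ.filter (fun k => y k = w)).filter
          (fun k => ¬ (∑ j, y' k j) ≤ 1)).filter (fun k => y' k ∈ Zc),
        κ k * φ i (y' k) = β w * ∑ z, Q ⟨w, hw⟩ z * ψ i z := by
      have hset : ((univ.filter (fun k => y k = w)).filter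
            (fun k => ¬ (∑ j, y' k j) ≤ 1)).filter (fun k => y' k ∈ Zc)
          = univ.filter (fun k => y k = w ∧ y' k ∈ Zc) := by
        rw [Finset.filter_filter, Finset.filter_filter]
        refine Finset.filter_congr fun k _ => ?_
        constructor
        · rintro ⟨h1, -, h2⟩; exact ⟨h1, h2⟩
        · rintro ⟨h1, h2⟩
          have := (hZmem _ h2).1
          exact ⟨h1, by omega, h2⟩
      rw [hset, ← fib w (fun k => κ k * φ i (y' k))]
      rw [Finset.univ_eq_attach]
      rw [← Finset.sum_attach Zc (fun z =>
        ∑ k ∈ univ.filter (fun k => y k = w ∧ y' k = z), κ k * φ i (y' k))]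
      rw [Finset.mul_sum]
      refine Finset.sum_congr rfl fun z _ => ?_
      have hinner : ∑ k ∈ univ.filter (fun k => y k = w ∧ y' k = z.1), κ k * φ i (y' k)
          = (∑ k ∈ univ.filter (fun k => y k = w ∧ y' k = z.1), κ k) * ψ i z := by
        rw [Finset.sum_mul]
        refine Finset.sum_congr rfl fun k hk => ?_
        obtain ⟨-, -, hk2⟩ := Finset.mem_filter.mp hk
        rw [hk2, hφ_zc i z.1 z.2]
      rw [hinner]
      show _ = β w * ((∑ k ∈ univ.filter (fun k => y k = w ∧ y' k = z.1), κ k) / β w * ψ i z)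
      field_simp
    have hg2 : β w * ψ i ⟨w, hw⟩
        = β w * ∑ z, Q ⟨w, hw⟩ z * ψ i z + β w * g i ⟨w, hw⟩ := by
      rw [hψs i ⟨w, hw⟩]; ring
    rw [← hsplit1, ← hsplit2, hlow, hmid, hhigh, hg2]
    ring
  -- define M and b
  set M : Matrix (Fin d) (Fin d) ℝ := fun i j =>
    ∑ k ∈ univ.filter (fun k => ∑ j', y k j' = 1),
      κ k * (y k j : ℝ) * (φ i (y' k) - φ i (y k)) with hM
  set b : Fin d → ℝ := fun i =>
    ∑ k ∈ univ.filter (fun k => ∑ j, y k j = 0), κ k * (φ i (y' k) - φ i (y k)) with hb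
  refine ⟨M, b, fun t ht => ?_⟩
  funext i
  have hmass : massActionRHS κ y y' (c t) i
      = ∑ k, κ k * monPow (c t) (y k) * ((y' k i : ℝ) - (y k i : ℝ)) := by
    show (∑ k, (κ k * monPow (c t) (y k)) • zetaVec (y k) (y' k)) i = _
    rw [Finset.sum_apply]
    refine Finset.sum_congr rfl fun k _ => ?_
    show (κ k * monPow (c t) (y k)) * zetaVec (y k) (y' k) i = _
    show (κ k * monPow (c t) (y k)) * ((y' k i : ℝ) - (y k i : ℝ)) = _
    ring
  have hlem0 := lemA κ y y' c hDR (fun z => (z i : ℝ) - φ i z)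
    (fun z hz => by show (z i : ℝ) - φ i z = 0; rw [hφ_low i z (by omega)]; ring) t ht
  have hlem : ∑ k, κ k * monPow (c t) (y k) * ((y k i : ℝ) - φ i (y k))
      = ∑ k, κ k * monPow (c t) (y k) * ((y' k i : ℝ) - φ i (y' k)) := hlem0
  have step2 : massActionRHS κ y y' (c t) i
      = ∑ k, κ k * monPow (c t) (y k) * (φ i (y' k) - φ i (y k)) := by
    rw [hmass]
    have e : ∀ k ∈ (univ : Finset (Fin K)),
        κ k * monPow (c t) (y k) * ((y' k i : ℝ) - (y k i : ℝ))
          = κ k * monPow (c t) (y k) * (φ i (y' k) - φ i (y k))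
            + (κ k * monPow (c t) (y k) * ((y' k i : ℝ) - φ i (y' k))
               - κ k * monPow (c t) (y k) * ((y k i : ℝ) - φ i (y k))) := fun k _ => by ring
    rw [Finset.sum_congr rfl e, Finset.sum_add_distrib, Finset.sum_sub_distrib, hlem,
      sub_self, add_zero]
  rw [step2]
  -- split the sum according to the order of the source complex
  rw [← Finset.sum_filter_add_sum_filter_not univ (fun k => ∑ j, y k j = 0)
    (fun k => κ k * monPow (c t) (y k) * (φ i (y' k) - φ i (y k)))]
  rw [← Finset.sum_filter_add_sum_filter_not (univ.filter (fun k => ¬ ∑ j, y k j = 0))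
    (fun k => ∑ j, y k j = 1) (fun k => κ k * monPow (c t) (y k) * (φ i (y' k) - φ i (y k)))]
  have hS0 : ∑ k ∈ univ.filter (fun k => ∑ j, y k j = 0),
      κ k * monPow (c t) (y k) * (φ i (y' k) - φ i (y k)) = b i := by
    refine Finset.sum_congr rfl fun k hk => ?_
    rw [monPow_of_sum_eq_zero _ (Finset.mem_filter.mp hk).2, mul_one]
  have hset1 : (univ.filter (fun k => ¬ ∑ j, y k j = 0)).filter (fun k => ∑ j, y k j = 1)
      = univ.filter (fun k => ∑ j, y k j = 1) := by
    rw [Finset.filter_filter]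
    refine Finset.filter_congr fun k _ => ?_
    constructor
    · rintro ⟨-, h⟩; exact h
    · intro h; exact ⟨by omega, h⟩
  have hset2 : ((univ.filter (fun k => ¬ ∑ j, y k j = 0)).filter
        (fun k => ¬ ∑ j, y k j = 1))
      = univ.filter (fun k => 2 ≤ ∑ j, y k j) := by
    rw [Finset.filter_filter]
    refine Finset.filter_congr fun k _ => ?_
    constructor
    · rintro ⟨h1, h2⟩; omega
    · intro h; omega
  have hS1 : ∑ k ∈ univ.filter (fun k => ∑ j, y k j = 1),
      κ k * monPow (c t) (y k) * (φ i (y' k) - φ i (y k)) = ∑ j, M i j * c t j := by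
    have e : ∀ k ∈ univ.filter (fun k => ∑ j, y k j = 1),
        κ k * monPow (c t) (y k) * (φ i (y' k) - φ i (y k))
          = ∑ j, (κ k * (y k j : ℝ) * (φ i (y' k) - φ i (y k))) * c t j := by
      intro k hk
      rw [monPow_of_sum_eq_one _ (Finset.mem_filter.mp hk).2, Finset.mul_sum, Finset.sum_mul]
      exact Finset.sum_congr rfl fun j _ => by ring
    rw [Finset.sum_congr rfl e, Finset.sum_comm]
    refine Finset.sum_congr rfl fun j _ => ?_
    rw [← Finset.sum_mul]
  have hS2 : ∑ k ∈ univ.filter (fun k => 2 ≤ ∑ j, y k j),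
      κ k * monPow (c t) (y k) * (φ i (y' k) - φ i (y k)) = 0 := by
    rw [← Finset.sum_fiberwise_of_maps_to (g := y)
      (t := (univ.image y).filter (fun w => 2 ≤ ∑ j, w j))
      (fun k hk => Finset.mem_filter.mpr
        ⟨Finset.mem_image_of_mem y (mem_univ k), (Finset.mem_filter.mp hk).2⟩)
      (fun k => κ k * monPow (c t) (y k) * (φ i (y' k) - φ i (y k)))]
    refine Finset.sum_eq_zero fun w hw => ?_
    obtain ⟨hwim, hw2⟩ := Finset.mem_filter.mp hw
    have hfibset : (univ.filter (fun k => 2 ≤ ∑ j, y k j)).filter (fun k => y k = w)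
        = univ.filter (fun k => y k = w) := by
      rw [Finset.filter_filter]
      refine Finset.filter_congr fun k _ => ?_
      constructor
      · rintro ⟨-, h⟩; exact h
      · intro h; exact ⟨by rw [h]; exact hw2, h⟩
    rw [hfibset]
    have emon : ∀ k ∈ univ.filter (fun k => y k = w),
        κ k * monPow (c t) (y k) * (φ i (y' k) - φ i (y k))
          = (κ k * φ i (y' k)) * monPow (c t) w - κ k * (monPow (c t) w * φ i w) := by
      intro k hk
      rw [(Finset.mem_filter.mp hk).2]
      ring
    rw [Finset.sum_congr rfl emon, Finset.sum_sub_distrib, ← Finset.sum_mul, ← Finset.sum_mul]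
    by_cases hzc : w ∈ Zc
    · rw [key i w hzc, hφ_zc i w hzc]
      ring
    · have hβw : β w = 0 := by
        by_contra hne
        exact hzc (Finset.mem_filter.mpr ⟨hwim, hw2, lt_of_le_of_ne (hβ0 w) (Ne.symm hne)⟩)
      have hk0 : ∀ k ∈ univ.filter (fun k => y k = w), κ k = 0 := by
        intro k hk
        exact (Finset.sum_eq_zero_iff_of_nonneg (fun k _ => hκ k)).mp hβw k hk
      rw [Finset.sum_eq_zero (fun k hk => by simp [hk0 k hk]),
        Finset.sum_eq_zero (fun k hk => by simp [hk0 k hk]),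
        zero_mul, zero_mul, sub_zero]
  rw [hS0, hset1, hS1, hset2, hS2, add_zero]
  have hfin : (M.mulVec (c t) + b) i = ∑ j, M i j * c t j + b i := by
    simp [Matrix.mulVec, dotProduct]
  rw [hfin]
  exact add_comm _ _

lemma positivity_of_massAction {d K : ℕ} (κ : Fin K → ℝ) (y y' : Fin K → Fin d → ℕ)
    (hκ : ∀ k, 0 ≤ κ k) (c : ℝ → Fin d → ℝ) (hc0 : ∀ i, 0 < c 0 i)
    (hODE : solvesMassAction κ y y' c) :
    ∀ t ≥ (0:ℝ), ∀ i, 0 < c t i := by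
  classical
  intro T hT
  by_contra hcon
  push_neg at hcon
  obtain ⟨iT, hiT⟩ := hcon
  -- continuity
  have hcont : ContinuousOn c (Set.Ici 0) := fun t ht =>
    (hODE t ht).continuousWithinAt
  have hconti : ∀ i, ContinuousOn (fun t => c t i) (Set.Ici 0) := fun i =>
    (continuous_apply i).comp_continuousOn hcont
  set S : Set ℝ := {t | t ∈ Set.Icc (0:ℝ) T ∧ ∃ i, c t i ≤ 0} with hS
  have hSclosed : IsClosed S := by
    have : S = ⋃ i : Fin d, (Set.Icc (0:ℝ) T ∩ (fun t => c t i) ⁻¹' Set.Iic 0) := by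
      ext t
      simp only [hS, Set.mem_setOf_eq, Set.mem_iUnion, Set.mem_inter_iff, Set.mem_preimage,
        Set.mem_Iic]
      constructor
      · rintro ⟨h1, i, h2⟩; exact ⟨i, h1, h2⟩
      · rintro ⟨i, h1, h2⟩; exact ⟨h1, i, h2⟩
    rw [this]
    refine isClosed_iUnion_of_finite fun i => ?_
    exact ContinuousOn.preimage_isClosed_of_isClosed
      ((hconti i).mono (fun t ht => ht.1)) isClosed_Icc isClosed_Iic
  have hSne : S.Nonempty := ⟨T, ⟨⟨hT, le_refl T⟩, iT, hiT⟩⟩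
  have hSbdd : BddBelow S := ⟨0, fun t ht => ht.1.1⟩
  set t₀ := sInf S with ht₀
  have ht₀S : t₀ ∈ S := hSclosed.csInf_mem hSne hSbdd
  obtain ⟨ht₀Icc, i₀, hi₀⟩ := ht₀S
  have ht₀pos : 0 < t₀ := by
    rcases lt_or_eq_of_le ht₀Icc.1 with h | h
    · exact h
    · exfalso; rw [← h] at hi₀; exact absurd hi₀ (not_le.mpr (hc0 i₀))
  have hlt : ∀ t, 0 ≤ t → t < t₀ → ∀ i, 0 < c t i := by
    intro t h0 hlt i
    have : t ∉ S := notMem_of_lt_csInf hlt hSbdd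
    by_contra hle
    exact this ⟨⟨h0, le_trans hlt.le ht₀Icc.2⟩, i, le_of_not_gt hle⟩
  have hIccsub : Set.Icc (0:ℝ) t₀ ⊆ Set.Ici 0 := fun t ht => ht.1
  have hnn : ∀ t ∈ Set.Icc (0:ℝ) t₀, ∀ j, 0 ≤ c t j := by
    intro t ht j
    have hE : IsClosed {s | s ∈ Set.Icc (0:ℝ) t₀ ∧ 0 ≤ c s j} := by
      have : {s | s ∈ Set.Icc (0:ℝ) t₀ ∧ 0 ≤ c s j}
          = Set.Icc (0:ℝ) t₀ ∩ (fun s => c s j) ⁻¹' Set.Ici 0 := rfl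
      rw [this]
      exact ContinuousOn.preimage_isClosed_of_isClosed
        ((hconti j).mono hIccsub) isClosed_Icc isClosed_Ici
    have hsub : Set.Ico (0:ℝ) t₀ ⊆ {s | s ∈ Set.Icc (0:ℝ) t₀ ∧ 0 ≤ c s j} := by
      intro s hs
      exact ⟨⟨hs.1, hs.2.le⟩, (hlt s hs.1 hs.2 j).le⟩
    have hsub2 : closure (Set.Ico (0:ℝ) t₀) ⊆ {s | s ∈ Set.Icc (0:ℝ) t₀ ∧ 0 ≤ c s j} :=
      hE.closure_subset_iff.mpr hsub
    have hclo : Set.Icc (0:ℝ) t₀ = closure (Set.Ico 0 t₀) := (closure_Ico (ne_of_lt ht₀pos)).symm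
    rw [hclo] at ht
    exact (hsub2 ht).2
  -- uniform bound
  obtain ⟨C, hC⟩ := (isCompact_Icc : IsCompact (Set.Icc (0:ℝ) t₀)).exists_bound_of_continuousOn
    (hcont.mono hIccsub)
  set B := max C 1 with hB
  have hB1 : (1:ℝ) ≤ B := le_max_right _ _
  have hB0 : (0:ℝ) < B := lt_of_lt_of_le one_pos hB1
  have hcB : ∀ t ∈ Set.Icc (0:ℝ) t₀, ∀ j, c t j ≤ B := by
    intro t ht j
    have h1 : ‖c t j‖ ≤ ‖c t‖ := norm_le_pi_norm (c t) j
    have h2 := hC t ht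
    calc c t j ≤ |c t j| := le_abs_self _
      _ = ‖c t j‖ := rfl
      _ ≤ ‖c t‖ := h1
      _ ≤ C := h2
      _ ≤ B := le_max_left _ _
  -- the Lipschitz-type constant
  set i := i₀
  set L : ℝ := ∑ k, κ k * (y k i : ℝ) * B ^ (∑ j, y k j) with hL
  have hL0 : 0 ≤ L :=
    Finset.sum_nonneg fun k _ =>
      mul_nonneg (mul_nonneg (hκ k) (Nat.cast_nonneg _)) (pow_nonneg hB0.le _)
  have hmon0 : ∀ t ∈ Set.Icc (0:ℝ) t₀, ∀ k, 0 ≤ monPow (c t) (y k) := by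
    intro t ht k
    exact Finset.prod_nonneg fun j _ => pow_nonneg (hnn t ht j) _
  have hmonbound : ∀ t ∈ Set.Icc (0:ℝ) t₀, ∀ k : Fin K,
      monPow (c t) (y k) * (y k i : ℝ) ≤ c t i * B ^ (∑ j, y k j) * (y k i : ℝ) := by
    intro t ht k
    rcases Nat.eq_zero_or_pos (y k i) with h0 | hpos
    · rw [h0]; simp
    · refine mul_le_mul_of_nonneg_right ?_ (Nat.cast_nonneg _)
      have hsplit : monPow (c t) (y k) = c t i ^ y k i * ∏ j ∈ univ.erase i, c t j ^ y k j :=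
        (Finset.mul_prod_erase univ (fun j => c t j ^ y k j) (mem_univ i)).symm
      have h1 : c t i ^ y k i ≤ c t i * B ^ y k i := by
        have : c t i ^ y k i = c t i * c t i ^ (y k i - 1) := by
          rw [← pow_succ']
          congr 1
          omega
        rw [this]
        refine mul_le_mul_of_nonneg_left ?_ (hnn t ht i)
        calc c t i ^ (y k i - 1) ≤ B ^ (y k i - 1) :=
              pow_le_pow_left₀ (hnn t ht i) (hcB t ht i) _
          _ ≤ B ^ y k i := pow_le_pow_right₀ hB1 (by omega)
      have h2 : ∏ j ∈ univ.erase i, c t j ^ y k j ≤ ∏ j ∈ univ.erase i, B ^ y k j := by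
        refine Finset.prod_le_prod (fun j _ => pow_nonneg (hnn t ht j) _) (fun j _ => ?_)
        exact pow_le_pow_left₀ (hnn t ht j) (hcB t ht j) _
      have h3 : B ^ y k i * ∏ j ∈ univ.erase i, B ^ y k j = B ^ (∑ j, y k j) := by
        rw [Finset.mul_prod_erase univ (fun j => B ^ y k j) (mem_univ i)]
        rw [← Finset.prod_pow_eq_pow_sum]
      calc monPow (c t) (y k) = c t i ^ y k i * ∏ j ∈ univ.erase i, c t j ^ y k j := hsplit
        _ ≤ (c t i * B ^ y k i) * ∏ j ∈ univ.erase i, B ^ y k j := by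
            refine mul_le_mul h1 h2 (Finset.prod_nonneg fun j _ => pow_nonneg (hnn t ht j) _) ?_
            exact mul_nonneg (hnn t ht i) (pow_nonneg hB0.le _)
        _ = c t i * (B ^ y k i * ∏ j ∈ univ.erase i, B ^ y k j) := by ring
        _ = c t i * B ^ (∑ j, y k j) := by rw [h3]
  have hbound : ∀ t ∈ Set.Icc (0:ℝ) t₀, -(L * c t i) ≤ massActionRHS κ y y' (c t) i := by
    intro t ht
    have hrhs : massActionRHS κ y y' (c t) i
        = ∑ k, κ k * monPow (c t) (y k) * ((y' k i : ℝ) - (y k i : ℝ)) := by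
      show (∑ k, (κ k * monPow (c t) (y k)) • zetaVec (y k) (y' k)) i = _
      rw [Finset.sum_apply]
      exact Finset.sum_congr rfl fun k _ => by
        show (κ k * monPow (c t) (y k)) * ((y' k i : ℝ) - (y k i : ℝ)) = _
        ring
    have hLsum : -(L * c t i) = ∑ k, -(κ k * (y k i : ℝ) * B ^ (∑ j, y k j) * c t i) := by
      rw [hL, Finset.sum_mul, ← Finset.sum_neg_distrib]
    rw [hrhs, hLsum]
    refine Finset.sum_le_sum fun k _ => ?_
    have hmb := mul_le_mul_of_nonneg_left (hmonbound t ht k) (hκ k)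
    have hpos1 : 0 ≤ κ k * monPow (c t) (y k) * (y' k i : ℝ) :=
      mul_nonneg (mul_nonneg (hκ k) (hmon0 t ht k)) (Nat.cast_nonneg _)
    nlinarith [hmb, hpos1]
  -- monotonicity of the exponentially weighted function
  set F : ℝ → ℝ := fun s => c s i * Real.exp (L * s) with hF
  have hderF : ∀ x ∈ Set.Ioo (0:ℝ) t₀, HasDerivAt F
      (massActionRHS κ y y' (c x) i * Real.exp (L * x)
        + c x i * (Real.exp (L * x) * L)) x := by
    intro x hx
    have hone : HasDerivWithinAt (fun s => c s i) (massActionRHS κ y y' (c x) i)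
        (Set.Ici 0) x := (hasDerivWithinAt_pi.mp (hODE x hx.1.le)) i
    have h1 : HasDerivAt (fun s => c s i) (massActionRHS κ y y' (c x) i) x :=
      hone.hasDerivAt (Ici_mem_nhds hx.1)
    have h2 : HasDerivAt (fun s => Real.exp (L * s)) (Real.exp (L * x) * L) x := by
      have h3 := ((hasDerivAt_id x).const_mul L).exp
      simpa using h3
    exact h1.mul h2
  have hFmono : MonotoneOn F (Set.Icc (0:ℝ) t₀) := by
    refine monotoneOn_of_deriv_nonneg (convex_Icc _ _) ?_ ?_ ?_
    · exact ContinuousOn.mul ((hconti i).mono hIccsub)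
        (Real.continuous_exp.comp (continuous_const.mul continuous_id)).continuousOn
    · intro x hx
      rw [interior_Icc] at hx
      exact (hderF x hx).differentiableAt.differentiableWithinAt
    · intro x hx
      rw [interior_Icc] at hx
      rw [(hderF x hx).deriv]
      have hxmem : x ∈ Set.Icc (0:ℝ) t₀ := ⟨hx.1.le, hx.2.le⟩
      have hb := hbound x hxmem
      have he := Real.exp_pos (L * x)
      have hcx := hnn x hxmem i
      nlinarith
  have hfin := hFmono (Set.left_mem_Icc.mpr ht₀pos.le)
    (Set.right_mem_Icc.mpr ht₀pos.le) ht₀pos.le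
  have hF0 : F 0 = c 0 i := by
    rw [hF]
    simp
  have hFt : F t₀ = c t₀ i * Real.exp (L * t₀) := rfl
  rw [hF0, hFt] at hfin
  have hcpos := hc0 i
  have he := Real.exp_pos (L * t₀)
  nlinarith [hi₀]

/-- Lemma 2.1: if `c` solves the mass-action ODE with `c(0) > 0` and satisfies the DR
condition, then `c(t) > 0` for all `t ≥ 0` and, along this solution, the right-hand side of
the mass-action ODE is an affine function `M c(t) + b` of `c(t)`. -/
theorem DR_implies_linear_dynamics_and_positivity
    {d K : ℕ} (κ : Fin K → ℝ) (y y' : Fin K → Fin d → ℕ)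
    (hκ : ∀ k, 0 ≤ κ k) (hyy' : ∀ k, y' k ≠ y k)
    (c : ℝ → Fin d → ℝ) (hc0 : ∀ i, 0 < c 0 i)
    (hODE : solvesMassAction κ y y' c)
    (hDR : DRcondition κ y y' c) :
    (∀ t ≥ (0:ℝ), ∀ i, 0 < c t i)
      ∧ ∃ (M : Matrix (Fin d) (Fin d) ℝ) (b : Fin d → ℝ),
          ∀ t ≥ (0:ℝ), massActionRHS κ y y' (c t) = M.mulVec (c t) + b := by
  constructor
  · exact positivity_of_massAction κ y y' hκ c hc0 hODE
  · exact affine_of_DR κ y y' hκ c hDR
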